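/- arXiv:math/0503072 — 2 statements merged into one kernel-verified Lean document; each statement's English description precedes it below -/
import Mathlib

section
/- Let M be a locally square integrable martingale with M_0 = 0 and M⁺ = (max(M_t,0))_{t≥0} of class D (uniformly integrable over all stopping times), and suppose ⟨M⟩_∞ < ∞ a.s. so that M_∞ = lim_{t→∞} M_t exists a.s. Then E[M_∞⁺] < ∞ and 0 ≤ E[M_∞] ≤ E[M_∞⁺]. -/
open MeasureTheory Filter Topology
open scoped NNReal ENNReal

/-! Along the stopping times `σ n = min n (τ n)`, which increase to `∞`, the variables
`M_{σ n}` are centred, converge a.s. to `M_∞`, and have uniformly integrable positive parts by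
class D. Vitali's theorem gives `E (M_{σ n})⁺ → E M_∞⁺`, so `E |M_{σ n}| = 2 E (M_{σ n})⁺` stays
bounded, and Fatou's lemma yields `E |M_∞| ≤ 2 E M_∞⁺`, i.e. `E M_∞⁻ ≤ E M_∞⁺`. -/

namespace MeasureTheory

theorem Martingale.integral_eq {Ω E ι : Type*} [Preorder ι] {m : MeasurableSpace Ω}
    {μ : Measure Ω} [NormedAddCommGroup E] [NormedSpace ℝ E] [CompleteSpace E]
    {ℱ : Filtration ι m} [SigmaFiniteFiltration μ ℱ] {f : ι → Ω → E}
    (hf : Martingale f ℱ μ) {i j : ι} (hij : i ≤ j) :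
    ∫ ω, f i ω ∂μ = ∫ ω, f j ω ∂μ := by
  simpa only [setIntegral_univ] using hf.setIntegral_eq hij MeasurableSet.univ

section

variable {α : Type*} {mα : MeasurableSpace α} {μ : Measure α}

theorem integrable_and_integral_norm_le_of_tendsto_ae {E : Type*} [NormedAddCommGroup E]
    {f : ℕ → α → E} {g : α → E} {L : ℝ} (hf : ∀ n, Integrable (f n) μ)
    (hfg : ∀ᵐ x ∂μ, Tendsto (fun n => f n x) atTop (𝓝 (g x)))
    (hL : Tendsto (fun n => ∫ x, ‖f n x‖ ∂μ) atTop (𝓝 L)) :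
    Integrable g μ ∧ ∫ x, ‖g x‖ ∂μ ≤ L := by
  have hg_meas : AEStronglyMeasurable g μ :=
    aestronglyMeasurable_of_tendsto_ae _ (fun n => (hf n).1) hfg
  have hfatou : ∫⁻ x, ‖g x‖ₑ ∂μ ≤ ENNReal.ofReal L :=
    calc ∫⁻ x, ‖g x‖ₑ ∂μ = eLpNorm g 1 μ := eLpNorm_one_eq_lintegral_enorm.symm
      _ ≤ atTop.liminf fun n => eLpNorm (f n) 1 μ :=
        Lp.eLpNorm_lim_le_liminf_eLpNorm (fun n => (hf n).1) g hfg
      _ = ENNReal.ofReal L := by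
        simp_rw [eLpNorm_one_eq_lintegral_enorm,
          ← ofReal_integral_norm_eq_lintegral_enorm (hf _)]
        exact ((ENNReal.continuous_ofReal.tendsto L).comp hL).liminf_eq
  have hg : Integrable g μ := ⟨hg_meas, hfatou.trans_lt ENNReal.ofReal_lt_top⟩
  have hL_nonneg : 0 ≤ L :=
    ge_of_tendsto' hL fun n => integral_nonneg fun x => norm_nonneg _
  refine ⟨hg, ?_⟩
  rwa [← ofReal_integral_norm_eq_lintegral_enorm hg,
    ENNReal.ofReal_le_ofReal_iff hL_nonneg] at hfatou

theorem UniformIntegrable.comp {ι κ β : Type*} [NormedAddCommGroup β] {p : ℝ≥0∞}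
    {f : ι → α → β} (hf : UniformIntegrable f p μ) (g : κ → ι) :
    UniformIntegrable (f ∘ g) p μ := by
  obtain ⟨hmeas, hunif, C, hC⟩ := hf
  refine ⟨fun k => hmeas (g k), fun ε hε => ?_, C, fun k => hC (g k)⟩
  obtain ⟨δ, hδ, hδε⟩ := hunif hε
  exact ⟨δ, hδ, fun k => hδε (g k)⟩

theorem tendsto_integral_of_uniformIntegrable_of_tendsto_ae [IsFiniteMeasure μ]
    {f : ℕ → α → ℝ} {g : α → ℝ} (hui : UniformIntegrable f 1 μ)
    (hfg : ∀ᵐ x ∂μ, Tendsto (fun n => f n x) atTop (𝓝 (g x))) :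
    Integrable g μ ∧ Tendsto (fun n => ∫ x, f n x ∂μ) atTop (𝓝 (∫ x, g x ∂μ)) := by
  have hg : Integrable g μ := hui.integrable_of_ae_tendsto hfg
  refine ⟨hg, tendsto_integral_of_L1' g hg.1 (Eventually.of_forall fun n => ?_) ?_⟩
  · exact (hui.memLp n).integrable le_rfl
  · exact tendsto_Lp_finite_of_tendsto_ae le_rfl ENNReal.one_ne_top hui.1
      (memLp_one_iff_integrable.2 hg) hui.2.1 hfg

theorem integral_nonneg_of_tendsto_ae_of_integral_eq_zero [IsFiniteMeasure μ]
    {f : ℕ → α → ℝ} {g : α → ℝ} (hf : ∀ n, Integrable (f n) μ)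
    (hf0 : ∀ n, ∫ x, f n x ∂μ = 0)
    (hui : UniformIntegrable (fun n x => max (f n x) 0) 1 μ)
    (hfg : ∀ᵐ x ∂μ, Tendsto (fun n => f n x) atTop (𝓝 (g x))) :
    Integrable g μ ∧ 0 ≤ ∫ x, g x ∂μ := by
  obtain ⟨-, hpos⟩ := tendsto_integral_of_uniformIntegrable_of_tendsto_ae hui
    (by filter_upwards [hfg] with x hx using hx.max tendsto_const_nhds)
  have habs : ∀ {h : α → ℝ}, Integrable h μ →
      ∫ x, ‖h x‖ ∂μ = 2 * ∫ x, max (h x) 0 ∂μ - ∫ x, h x ∂μ := fun hh =>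
    integral_abs_eq_two_mul_integral_posPart_sub_integral hh
  obtain ⟨hg, hg_le⟩ := integrable_and_integral_norm_le_of_tendsto_ae hf hfg
    (L := 2 * ∫ x, max (g x) 0 ∂μ)
    (by simpa only [habs (hf _), hf0, sub_zero] using hpos.const_mul 2)
  refine ⟨hg, ?_⟩
  rw [habs hg] at hg_le
  linarith

end

end MeasureTheory

theorem positive_expectation_limit_general {Ω : Type*} {m : MeasurableSpace Ω}
    (μ : Measure Ω) [IsProbabilityMeasure μ] (ℱ : Filtration ℝ≥0 m)
    (M : ℝ≥0 → Ω → ℝ) (hM0 : ∀ ω, M 0 ω = 0)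
    -- M is a locally square integrable martingale, with localizing sequence τ
    (τ : ℕ → Ω → ℝ≥0) (hτ : ∀ n, IsStoppingTime ℱ (fun ω => ((τ n ω : ℝ≥0) : WithTop ℝ≥0)))
    (hτtop : ∀ ω, Tendsto (fun n => τ n ω) atTop atTop)
    (hMloc : ∀ n, Martingale (fun t ω => M (min t (τ n ω)) ω) ℱ μ)
    -- M⁺ is of class D : the family {M⁺_σ : σ a stopping time} is uniformly integrable
    (hClassD : UniformIntegrable
      (fun σ : {σ : Ω → ℝ≥0 // IsStoppingTime ℱ (fun ω => ((σ ω : ℝ≥0) : WithTop ℝ≥0))} => fun ω => max (M (σ.1 ω) ω) 0) 1 μ)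
    -- ⟨M⟩_∞ < ∞ a.s., so that the limit M_∞ exists a.s.
    (Minf : Ω → ℝ) (hMinf : ∀ᵐ ω ∂μ, Tendsto (fun t => M t ω) atTop (nhds (Minf ω))) :
    Integrable (fun ω => max (Minf ω) 0) μ ∧
      0 ≤ ∫ ω, Minf ω ∂μ ∧ ∫ ω, Minf ω ∂μ ≤ ∫ ω, max (Minf ω) 0 ∂μ := by
  let σ : ℕ → Ω → ℝ≥0 := fun n ω => min (n : ℝ≥0) (τ n ω)
  have hσ (n : ℕ) : IsStoppingTime ℱ fun ω => ((σ n ω : ℝ≥0) : WithTop ℝ≥0) := by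
    simpa only [σ, WithTop.coe_min] using (isStoppingTime_const ℱ (n : ℝ≥0)).min (hτ n)
  have hσ_top (ω : Ω) : Tendsto (fun n => σ n ω) atTop atTop :=
    tendsto_inf_atTop _ tendsto_natCast_atTop_atTop (hτtop ω)
  -- `M (σ n)` is the value at time `n` of the martingale `M` stopped at `τ n`
  have hcentered (n : ℕ) : ∫ ω, M (σ n ω) ω ∂μ = 0 := by
    simpa [hM0] using ((hMloc n).integral_eq (zero_le : 0 ≤ (n : ℝ≥0))).symm
  have hlim : ∀ᵐ ω ∂μ, Tendsto (fun n => M (σ n ω) ω) atTop (𝓝 (Minf ω)) := by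
    filter_upwards [hMinf] with ω hω using hω.comp (hσ_top ω)
  obtain ⟨hint, hnonneg⟩ := integral_nonneg_of_tendsto_ae_of_integral_eq_zero
    (fun n => (hMloc n).integrable n) hcentered
    (hClassD.comp fun n => ⟨σ n, hσ n⟩) hlim
  exact ⟨hint.pos_part, hnonneg, integral_mono hint hint.pos_part fun ω => le_max_left _ _⟩

theorem positive_expectation_limit {Ω : Type*} {m : MeasurableSpace Ω}
    (μ : Measure Ω) [IsProbabilityMeasure μ] (ℱ : Filtration ℝ≥0 m)
    (M : ℝ≥0 → Ω → ℝ) (hM0 : ∀ ω, M 0 ω = 0)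
    -- M is a locally square integrable martingale, with localizing sequence τ
    (τ : ℕ → Ω → ℝ≥0) (hτ : ∀ n, IsStoppingTime ℱ (fun ω => ((τ n ω : ℝ≥0) : WithTop ℝ≥0)))
    (hτmono : ∀ ω, Monotone fun n => τ n ω)
    (hτtop : ∀ ω, Tendsto (fun n => τ n ω) atTop atTop)
    (hMloc : ∀ n, Martingale (fun t ω => M (min t (τ n ω)) ω) ℱ μ)
    (hMsq : ∀ n t, MemLp (fun ω => M (min t (τ n ω)) ω) 2 μ)
    -- M⁺ is of class D : the family {M⁺_σ : σ a stopping time} is uniformly integrable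
    (hClassD : UniformIntegrable
      (fun σ : {σ : Ω → ℝ≥0 // IsStoppingTime ℱ (fun ω => ((σ ω : ℝ≥0) : WithTop ℝ≥0))} => fun ω => max (M (σ.1 ω) ω) 0) 1 μ)
    -- ⟨M⟩_∞ < ∞ a.s., so that the limit M_∞ exists a.s.
    (Minf : Ω → ℝ) (hMinf : ∀ᵐ ω ∂μ, Tendsto (fun t => M t ω) atTop (nhds (Minf ω))) :
    Integrable (fun ω => max (Minf ω) 0) μ ∧
      0 ≤ ∫ ω, Minf ω ∂μ ∧ ∫ ω, Minf ω ∂μ ≤ ∫ ω, max (Minf ω) 0 ∂μ :=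
  positive_expectation_limit_general μ ℱ M hM0 τ hτ hτtop hMloc hClassD Minf hMinf
end

section
/- Let f, g : (0,∞) → [0,∞) and c > 0 with lim_{λ→∞} λ g(λ) = c. Suppose for every a ∈ (0,1) there exist constants r > 0 such that for all λ > 0: λ f(λ) ≤ (1-a)^{-1}·(1-a)λ·g((1-a)λ) + a^{-4}λ^{-1/2} + r^{-1}λ^{-1/4}·(rλ^{5/4})·g(rλ^{5/4}), and symmetrically λ g(λ) ≤ (1-a)^{-1}·(1-a)λ·f((1-a)λ) + a^{-4}λ^{-1/2} + r^{-1}λ^{-1/4}·(rλ^{5/4})·g(rλ^{5/4}). Then lim_{λ→∞} λ f(λ) = c. -/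
open Filter

private lemma tail_sandwich_aux (g : ℝ → ℝ) (c : ℝ)
    (hglim : Tendsto (fun l => l * g l) atTop (nhds c))
    {a r : ℝ} (ha0 : 0 < a) (ha1 : a < 1) (hr : 0 < r) :
    Tendsto (fun l : ℝ => (1 - a)⁻¹ * (((1 - a) * l) * g ((1 - a) * l)) +
      a⁻¹ ^ 4 * l ^ (-(1/2) : ℝ) +
      (r⁻¹ * l ^ (-(1/4) : ℝ)) * ((r * l ^ ((5:ℝ)/4)) * g (r * l ^ ((5:ℝ)/4))))
      atTop (nhds ((1 - a)⁻¹ * c)) := by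
  have h1a : (0:ℝ) < 1 - a := by linarith
  have T1 : Tendsto (fun l : ℝ => ((1 - a) * l) * g ((1 - a) * l)) atTop (nhds c) :=
    hglim.comp (tendsto_id.const_mul_atTop h1a)
  have T2 : Tendsto (fun l : ℝ => l ^ (-(1/2) : ℝ)) atTop (nhds 0) :=
    tendsto_rpow_neg_atTop (by norm_num)
  have T3 : Tendsto (fun l : ℝ => (r * l ^ ((5:ℝ)/4)) * g (r * l ^ ((5:ℝ)/4))) atTop (nhds c) :=
    hglim.comp ((tendsto_rpow_atTop (by norm_num)).const_mul_atTop hr)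
  have T4 : Tendsto (fun l : ℝ => r⁻¹ * l ^ (-(1/4) : ℝ)) atTop (nhds 0) := by
    simpa using (tendsto_rpow_neg_atTop (y := 1/4) (by norm_num)).const_mul r⁻¹
  have := ((T1.const_mul (1 - a)⁻¹).add (T2.const_mul (a⁻¹ ^ 4))).add (T4.mul T3)
  simpa using this

private lemma tail_sandwich_aux2 (g : ℝ → ℝ) (c : ℝ)
    (hglim : Tendsto (fun l => l * g l) atTop (nhds c))
    {a r : ℝ} (ha0 : 0 < a) (ha1 : a < 1) (hr : 0 < r) :
    Tendsto (fun m : ℝ => (1 - a) * ((m / (1 - a)) * g (m / (1 - a)) -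
      a⁻¹ ^ 4 * (m / (1 - a)) ^ (-(1/2) : ℝ) -
      (r⁻¹ * (m / (1 - a)) ^ (-(1/4) : ℝ)) *
        ((r * (m / (1 - a)) ^ ((5:ℝ)/4)) * g (r * (m / (1 - a)) ^ ((5:ℝ)/4)))))
      atTop (nhds ((1 - a) * c)) := by
  have h1a : (0:ℝ) < 1 - a := by linarith
  have T2 : Tendsto (fun l : ℝ => l ^ (-(1/2) : ℝ)) atTop (nhds 0) :=
    tendsto_rpow_neg_atTop (by norm_num)
  have T3 : Tendsto (fun l : ℝ => (r * l ^ ((5:ℝ)/4)) * g (r * l ^ ((5:ℝ)/4))) atTop (nhds c) :=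
    hglim.comp ((tendsto_rpow_atTop (by norm_num)).const_mul_atTop hr)
  have T4 : Tendsto (fun l : ℝ => r⁻¹ * l ^ (-(1/4) : ℝ)) atTop (nhds 0) := by
    simpa using (tendsto_rpow_neg_atTop (y := 1/4) (by norm_num)).const_mul r⁻¹
  have TL : Tendsto (fun l : ℝ => l * g l - a⁻¹ ^ 4 * l ^ (-(1/2) : ℝ) -
      (r⁻¹ * l ^ (-(1/4) : ℝ)) * ((r * l ^ ((5:ℝ)/4)) * g (r * l ^ ((5:ℝ)/4))))
      atTop (nhds c) := by
    have := (hglim.sub (T2.const_mul (a⁻¹ ^ 4))).sub (T4.mul T3)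
    simpa using this
  have Tdiv : Tendsto (fun m : ℝ => m / (1 - a)) atTop atTop :=
    tendsto_id.atTop_div_const h1a
  exact (TL.comp Tdiv).const_mul (1 - a)

theorem tail_sandwich (f g : ℝ → ℝ) (hf : ∀ l > 0, 0 ≤ f l) (hg : ∀ l > 0, 0 ≤ g l)
    (c : ℝ) (hc : 0 < c) (hglim : Tendsto (fun l => l * g l) atTop (nhds c))
    (hbound : ∀ a ∈ Set.Ioo (0:ℝ) 1, ∃ r > 0, ∀ l > 0,
      l * f l ≤ (1 - a)⁻¹ * ((1 - a) * l) * g ((1 - a) * l) + a⁻¹ ^ 4 * l ^ (-(1/2) : ℝ) +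
          r⁻¹ * l ^ (-(1/4) : ℝ) * (r * l ^ ((5:ℝ)/4)) * g (r * l ^ ((5:ℝ)/4)) ∧
        l * g l ≤ (1 - a)⁻¹ * ((1 - a) * l) * f ((1 - a) * l) + a⁻¹ ^ 4 * l ^ (-(1/2) : ℝ) +
          r⁻¹ * l ^ (-(1/4) : ℝ) * (r * l ^ ((5:ℝ)/4)) * g (r * l ^ ((5:ℝ)/4))) :
    Tendsto (fun l => l * f l) atTop (nhds c) := by
  refine tendsto_order.2 ⟨fun b hb => ?_, fun b hb => ?_⟩
  · -- lower bound : b < c, show eventually b < l * f l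
    set a : ℝ := min (1/2) ((c - b) / (2 * c)) with ha_def
    have ha0 : 0 < a := lt_min (by norm_num) (div_pos (by linarith) (by linarith))
    have ha1 : a < 1 := lt_of_le_of_lt (min_le_left _ _) (by norm_num)
    have h1a : (0:ℝ) < 1 - a := by linarith
    obtain ⟨r, hr, hineq⟩ := hbound a ⟨ha0, ha1⟩
    have TLo := tail_sandwich_aux2 g c hglim ha0 ha1 hr
    have hbc : b < (1 - a) * c := by
      have hmr : a * (2 * c) ≤ c - b :=
        (le_div_iff₀ (by positivity)).1 (min_le_right (1/2 : ℝ) ((c - b) / (2 * c)))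
      nlinarith
    filter_upwards [TLo.eventually_const_lt hbc, eventually_gt_atTop (0:ℝ)] with m hm hm0
    set l : ℝ := m / (1 - a) with hl_def
    have hl0 : 0 < l := div_pos hm0 h1a
    have hml : (1 - a) * l = m := by rw [hl_def]; field_simp
    have h2 := (hineq l hl0).2
    rw [hml] at h2
    have h2' : l * g l - a⁻¹ ^ 4 * l ^ (-(1/2) : ℝ) -
        (r⁻¹ * l ^ (-(1/4) : ℝ)) * ((r * l ^ ((5:ℝ)/4)) * g (r * l ^ ((5:ℝ)/4)))
        ≤ (1 - a)⁻¹ * (m * f m) := by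
      have : (1 - a)⁻¹ * m * f m + a⁻¹ ^ 4 * l ^ (-(1/2) : ℝ) +
          r⁻¹ * l ^ (-(1/4) : ℝ) * (r * l ^ ((5:ℝ)/4)) * g (r * l ^ ((5:ℝ)/4))
          = (1 - a)⁻¹ * (m * f m) + a⁻¹ ^ 4 * l ^ (-(1/2) : ℝ) +
          (r⁻¹ * l ^ (-(1/4) : ℝ)) * ((r * l ^ ((5:ℝ)/4)) * g (r * l ^ ((5:ℝ)/4))) := by ring
      rw [this] at h2
      linarith
    have key : (1 - a) * (l * g l - a⁻¹ ^ 4 * l ^ (-(1/2) : ℝ) -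
        (r⁻¹ * l ^ (-(1/4) : ℝ)) * ((r * l ^ ((5:ℝ)/4)) * g (r * l ^ ((5:ℝ)/4))))
        ≤ m * f m := by
      calc (1 - a) * _ ≤ (1 - a) * ((1 - a)⁻¹ * (m * f m)) :=
            mul_le_mul_of_nonneg_left h2' h1a.le
        _ = m * f m := by field_simp
    exact lt_of_lt_of_le hm key
  · -- upper bound : c < b, show eventually l * f l < b
    have hb0 : 0 < b := hc.trans hb
    set a : ℝ := min (1/2) ((b - c) / (2 * b)) with ha_def
    have ha0 : 0 < a := lt_min (by norm_num) (div_pos (by linarith) (by linarith))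
    have ha1 : a < 1 := lt_of_le_of_lt (min_le_left _ _) (by norm_num)
    have h1a : (0:ℝ) < 1 - a := by linarith
    obtain ⟨r, hr, hineq⟩ := hbound a ⟨ha0, ha1⟩
    have hS := tail_sandwich_aux g c hglim ha0 ha1 hr
    have hcb : (1 - a)⁻¹ * c < b := by
      have hmr : a * (2 * b) ≤ b - c :=
        (le_div_iff₀ (by positivity)).1 (min_le_right (1/2 : ℝ) ((b - c) / (2 * b)))
      have h1 : c < (1 - a) * b := by nlinarith
      have := mul_lt_mul_of_pos_left h1 (inv_pos.2 h1a)
      rwa [← mul_assoc, inv_mul_cancel₀ h1a.ne', one_mul] at this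
    filter_upwards [hS.eventually_lt_const hcb, eventually_gt_atTop (0:ℝ)] with l hm hl0
    have h1 := (hineq l hl0).1
    have heq : (1 - a)⁻¹ * ((1 - a) * l) * g ((1 - a) * l) + a⁻¹ ^ 4 * l ^ (-(1/2) : ℝ) +
        r⁻¹ * l ^ (-(1/4) : ℝ) * (r * l ^ ((5:ℝ)/4)) * g (r * l ^ ((5:ℝ)/4))
        = (1 - a)⁻¹ * (((1 - a) * l) * g ((1 - a) * l)) + a⁻¹ ^ 4 * l ^ (-(1/2) : ℝ) +
        (r⁻¹ * l ^ (-(1/4) : ℝ)) * ((r * l ^ ((5:ℝ)/4)) * g (r * l ^ ((5:ℝ)/4))) := by ring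
    rw [heq] at h1
    exact lt_of_le_of_lt h1 hm
end
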